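/- arXiv:2407.07371 — 5 statements merged into one kernel-verified Lean document; each statement's English description precedes it below -/
import Mathlib

section
/- Let U, V be Hilbert spaces and b: U × V → ℝ a continuous bilinear form satisfying the inf-sup condition: there exists α > 0 with α‖u‖_U ≤ sup_{0 ≠ v ∈ V} b(u,v)/‖v‖_V for all u ∈ U. Let V₀ = {v ∈ V : b(u,v) = 0 for all u ∈ U}. Then for every continuous linear functional ℓ ∈ V' that vanishes on V₀, the problem: find u ∈ U with b(u,v) = ℓ(v) for all v ∈ V, has a unique solution, and ‖u‖_U ≤ (1/α)‖ℓ‖_{V'}. -/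
/-!
The inf-sup condition makes `u ↦ b u : U → V'` bounded below, hence injective with closed range.
Transported to `V` by the Riesz isometry, the range is a closed subspace `K`, so `K = Kᗮᗮ`.
A functional vanishing on `V₀` has its Riesz representative orthogonal to `Kᗮ` (which is the
image of `V₀`), so it lies in `K`: that is, `ℓ = b u` for some `u`.
-/

theorem ContinuousLinearMap.antilipschitz_of_mul_norm_le {𝕜 E F : Type*} [NormedField 𝕜]
    [SeminormedAddCommGroup E] [NormedSpace 𝕜 E] [SeminormedAddCommGroup F] [NormedSpace 𝕜 F]
    (f : E →L[𝕜] F) {α : ℝ} (hα : 0 < α) (h : ∀ x, α * ‖x‖ ≤ ‖f x‖) :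
    AntilipschitzWith ⟨α⁻¹, (inv_pos.2 hα).le⟩ f :=
  f.antilipschitz_of_bound fun x => by
    show ‖x‖ ≤ α⁻¹ * ‖f x‖
    rw [inv_mul_eq_div, le_div_iff₀' hα]
    exact h x

theorem ContinuousLinearMap.exists_apply_eq_of_isClosed_range {U V : Type*}
    [NormedAddCommGroup U] [NormedSpace ℝ U]
    [NormedAddCommGroup V] [InnerProductSpace ℝ V] [CompleteSpace V]
    (b : U →L[ℝ] StrongDual ℝ V) (hb : IsClosed (Set.range b)) (ℓ : StrongDual ℝ V)
    (hℓ : ∀ v, (∀ u, b u v = 0) → ℓ v = 0) : ∃ u, b u = ℓ := by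
  let e := (InnerProductSpace.toDual ℝ V).symm
  let K : Submodule ℝ V :=
    (LinearMap.range (b : U →ₗ[ℝ] StrongDual ℝ V)).map e.toLinearEquiv.toLinearMap
  have hK : IsClosed (K : Set V) := by
    simpa [K, LinearMap.coe_range] using e.toHomeomorph.isClosedMap _ hb
  have : CompleteSpace K := hK.completeSpace_coe
  have hℓK : e ℓ ∈ Kᗮᗮ := by
    intro v hv
    have hbv : ∀ u, b u v = 0 := fun u => by
      simpa [e, InnerProductSpace.toDual_symm_apply] using hv (e (b u)) ⟨b u, ⟨u, rfl⟩, rfl⟩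
    rw [real_inner_comm, InnerProductSpace.toDual_symm_apply, hℓ v hbv]
  rw [K.orthogonal_orthogonal] at hℓK
  obtain ⟨_, ⟨u, rfl⟩, hu⟩ := hℓK
  exact ⟨u, e.injective hu⟩

/-- Babuška–Nečas.  If the continuous bilinear form
`b : U × V → ℝ` on real Hilbert spaces satisfies the inf-sup condition
`α‖u‖ ≤ sup_{v ≠ 0} b(u,v)/‖v‖ = ‖b u‖_{V'}`, then for every `ℓ ∈ V'`
vanishing on `V₀ = {v : b(u,v) = 0 ∀u}` the problem `b(u,v) = ℓ(v) ∀v` has a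
unique solution, with `‖u‖ ≤ (1/α)‖ℓ‖`. -/
theorem babuska_necas
    {U V : Type*}
    [NormedAddCommGroup U] [InnerProductSpace ℝ U] [CompleteSpace U]
    [NormedAddCommGroup V] [InnerProductSpace ℝ V] [CompleteSpace V]
    (b : U →L[ℝ] V →L[ℝ] ℝ)
    (α : ℝ) (hα : 0 < α)
    (hinfsup : ∀ u : U, α * ‖u‖ ≤ ‖b u‖)
    (ℓ : V →L[ℝ] ℝ)
    (hℓ : ∀ v : V, (∀ u : U, b u v = 0) → ℓ v = 0) :
    (∃! u : U, ∀ v : V, b u v = ℓ v) ∧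
    (∀ u : U, (∀ v : V, b u v = ℓ v) → ‖u‖ ≤ (1 / α) * ‖ℓ‖) := by
  have hanti := b.antilipschitz_of_mul_norm_le hα hinfsup
  obtain ⟨u₀, hu₀⟩ :=
    b.exists_apply_eq_of_isClosed_range (hanti.isClosed_range b.uniformContinuous) ℓ hℓ
  refine ⟨⟨u₀, fun v => by rw [hu₀], fun u hu => hanti.injective ?_⟩, fun u hu => ?_⟩
  · rw [hu₀]
    exact ContinuousLinearMap.ext hu
  · rw [one_div_mul_eq_div, le_div_iff₀' hα, ← ContinuousLinearMap.ext hu]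
    exact hinfsup u
end

section
/- (Abstract broken well-posedness theorem.) Let U, Û be Hilbert trial spaces, W a Hilbert test space, and V ⊆ W a closed subspace. Let b: U × W → ℝ and b̂: Û × W → ℝ be continuous bilinear forms. Assume (A3) there is α > 0 with α‖u‖_U ≤ sup_{0≠v∈V} b(u,v)/‖v‖_W for all u ∈ U; and (A4) V = {v ∈ W : b̂(û,v) = 0 for all û ∈ Û} and there is α̂ > 0 with α̂‖û‖_Û ≤ sup_{0≠v∈W} b̂(û,v)/‖v‖_W for all û ∈ Û. Then there exists α₁ > 0 such that α₁‖(u,û)‖_{U×Û} ≤ sup_{0≠v∈W} (b(u,v)+b̂(û,v))/‖v‖_W for all (u,û) ∈ U × Û. Moreover, W₀ := {v ∈ W : b(u,v)+b̂(û,v) = 0 ∀(u,û)} equals V₀ := {v ∈ V : b(u,v) = 0 ∀u ∈ U}. -/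
/-- abstract broken well-posedness, Carstensen–Demkowicz–
Gopalakrishnan.  `U`, `Û` are Hilbert trial spaces, `W` a Hilbert test space,
`V ⊆ W` a closed subspace, `b`, `b̂` continuous bilinear forms.  The inf-sup
conditions are expressed via dual norms:
`sup_{0≠v∈V} b(u,v)/‖v‖_W = ‖(b u)|_V‖` and `sup_{0≠v∈W} b̂(û,v)/‖v‖_W = ‖b̂ û‖`.
Conclusion: a combined inf-sup condition with some `α₁ > 0` holds on `U × Û`
(with `‖(u,û)‖² = ‖u‖² + ‖û‖²`), and `W₀ = V₀`. -/
theorem abstract_broken_well_posedness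
    {U Uhat W : Type*}
    [NormedAddCommGroup U] [InnerProductSpace ℝ U] [CompleteSpace U]
    [NormedAddCommGroup Uhat] [InnerProductSpace ℝ Uhat] [CompleteSpace Uhat]
    [NormedAddCommGroup W] [InnerProductSpace ℝ W] [CompleteSpace W]
    (V : Submodule ℝ W) (hVclosed : IsClosed (V : Set W))
    (b : U →L[ℝ] W →L[ℝ] ℝ) (bhat : Uhat →L[ℝ] W →L[ℝ] ℝ)
    -- (A3) inf-sup for b over the subspace V
    (α : ℝ) (hα : 0 < α)
    (hA3 : ∀ u : U, α * ‖u‖ ≤ ‖(b u).comp V.subtypeL‖)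
    -- (A4) V is the kernel of b̂ in the second argument, and b̂ satisfies an
    -- inf-sup condition over W
    (hV : (V : Set W) = {v : W | ∀ uh : Uhat, bhat uh v = 0})
    (αhat : ℝ) (hαhat : 0 < αhat)
    (hA4 : ∀ uh : Uhat, αhat * ‖uh‖ ≤ ‖bhat uh‖) :
    (∃ α₁ > 0, ∀ (u : U) (uh : Uhat),
        α₁ * Real.sqrt (‖u‖ ^ 2 + ‖uh‖ ^ 2) ≤ ‖b u + bhat uh‖) ∧
    ({v : W | ∀ (u : U) (uh : Uhat), b u v + bhat uh v = 0}
      = {v : W | v ∈ V ∧ ∀ u : U, b u v = 0}) := by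
  have hbhatV : ∀ (uh : Uhat) (v : W), v ∈ V → bhat uh v = 0 := by
    intro uh v hv
    have : v ∈ {v : W | ∀ uh : Uhat, bhat uh v = 0} := hV ▸ hv
    exact this uh
  constructor
  · -- combined inf-sup
    set c1 : ℝ := 1 / α with hc1
    set c2 : ℝ := (1 + ‖b‖ / α) / αhat with hc2
    have hc1pos : 0 < c1 := by positivity
    have hc2pos : 0 < c2 := by
      have hb : 0 ≤ ‖b‖ := ContinuousLinearMap.opNorm_nonneg b
      have : 0 < 1 + ‖b‖ / α := by positivity
      positivity
    have hCpos : 0 < Real.sqrt (c1 ^ 2 + c2 ^ 2) := Real.sqrt_pos.2 (by positivity)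
    refine ⟨(Real.sqrt (c1 ^ 2 + c2 ^ 2))⁻¹, by positivity, ?_⟩
    intro u uh
    set M : ℝ := ‖b u + bhat uh‖ with hM
    have hM0 : 0 ≤ M := norm_nonneg _
    -- step 1: α‖u‖ ≤ M
    have h1 : α * ‖u‖ ≤ M := by
      refine (hA3 u).trans ?_
      refine ContinuousLinearMap.opNorm_le_bound _ hM0 ?_
      intro x
      have hx : bhat uh (x : W) = 0 := hbhatV uh x x.2
      have : (b u) (x : W) = (b u + bhat uh) (x : W) := by
        simp [hx]
      rw [ContinuousLinearMap.comp_apply, Submodule.subtypeL_apply, this]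
      calc ‖(b u + bhat uh) (x : W)‖ ≤ M * ‖(x : W)‖ :=
            (b u + bhat uh).le_opNorm _
        _ = M * ‖x‖ := by rw [Submodule.norm_coe]
    have hu : ‖u‖ ≤ c1 * M := by
      rw [hc1]
      rw [div_mul_eq_mul_div, le_div_iff₀ hα]
      linarith [h1]
    -- step 2
    have hbu : ‖b u‖ ≤ ‖b‖ * ‖u‖ := b.le_opNorm u
    have h2 : αhat * ‖uh‖ ≤ M + ‖b‖ * ‖u‖ := by
      refine (hA4 uh).trans ?_
      rw [(add_sub_cancel_left (b u) (bhat uh)).symm]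
      exact (norm_sub_le _ _).trans (by gcongr)
    have huh : ‖uh‖ ≤ c2 * M := by
      have hbnn : 0 ≤ ‖b‖ := ContinuousLinearMap.opNorm_nonneg b
      have hbuM : ‖b u‖ ≤ ‖b‖ * (c1 * M) := by
        refine hbu.trans ?_
        gcongr
      rw [hc2, div_mul_eq_mul_div, le_div_iff₀ hαhat]
      have : αhat * ‖uh‖ ≤ M + ‖b‖ * (c1 * M) := by
        refine h2.trans ?_
        have : ‖b‖ * ‖u‖ ≤ ‖b‖ * (c1 * M) := by gcongr
        linarith
      calc ‖uh‖ * αhat = αhat * ‖uh‖ := by ring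
        _ ≤ M + ‖b‖ * (c1 * M) := this
        _ = (1 + ‖b‖ / α) * M := by rw [hc1]; field_simp
    -- combine
    have hsq : ‖u‖ ^ 2 + ‖uh‖ ^ 2 ≤ (c1 ^ 2 + c2 ^ 2) * M ^ 2 := by
      nlinarith [norm_nonneg u, norm_nonneg uh, hu, huh]
    have hsqrt : Real.sqrt (‖u‖ ^ 2 + ‖uh‖ ^ 2) ≤ Real.sqrt (c1 ^ 2 + c2 ^ 2) * M := by
      have := Real.sqrt_le_sqrt hsq
      refine this.trans ?_
      rw [Real.sqrt_mul (by positivity), Real.sqrt_sq hM0]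
    rw [inv_mul_le_iff₀ hCpos]
    exact hsqrt
  · ext v
    simp only [Set.mem_setOf_eq]
    constructor
    · intro h
      have hb0 : ∀ u : U, b u v = 0 := by
        intro u; have := h u 0; simpa using this
      have hbh0 : ∀ uh : Uhat, bhat uh v = 0 := by
        intro uh; have := h 0 uh; simpa using this
      exact ⟨by rw [← SetLike.mem_coe, hV]; exact hbh0, hb0⟩
    · intro ⟨hvV, hb0⟩ u uh
      rw [hb0 u, hbhatV uh v hvV]
      ring
end

section
/- Under the assumptions of the abstract broken well-posedness theorem, if additionally V₀ = {0}, then for every continuous linear functional ℓ on W the broken problem: find (u,û) ∈ U × Û with b(u,v) + b̂(û,v) = ℓ(v) for all v ∈ W, has a unique solution, and its U-component u coincides with the unique solution of the unbroken problem b(u,v) = ℓ(v) for all v ∈ V. -/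
/-!
Both problems are instances of the Banach–Nečas–Babuška theorem: if `α ‖a‖ ≤ ‖c a‖` and `ℓ`
vanishes wherever all the functionals `c a` vanish, then `c a = ℓ` has exactly one solution. The
lower bound makes `c` injective with closed range in the dual, and through the Riesz isomorphism a
closed subspace of the dual of a Hilbert space is the annihilator of its common kernel.

Applied to `b` restricted to `V`, where `V₀ = {0}` makes every `ℓ` admissible, this gives the
unbroken solution `u₀`. Since `V` is the common kernel of the functionals `b̂ û`, the functional
`ℓ - b u₀`, which vanishes on `V`, is `b̂ û₀` for a unique `û₀`. Conversely, `b̂` vanishes on `V`,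
so the `U`-component of any broken solution solves the unbroken problem and hence equals `u₀`.
-/

open InnerProductSpace

section InfSup

variable {𝕜 E F : Type*} [RCLike 𝕜] [NormedAddCommGroup E] [NormedSpace 𝕜 E]

theorem ContinuousLinearMap.antilipschitz_of_inf_sup [NormedAddCommGroup F] [NormedSpace 𝕜 F]
    (T : E →L[𝕜] F) {α : ℝ} (hα : 0 < α) (hT : ∀ x, α * ‖x‖ ≤ ‖T x‖) :
    AntilipschitzWith (Real.toNNReal α⁻¹) T :=
  T.antilipschitz_of_bound fun x => by
    rw [Real.coe_toNNReal _ (inv_nonneg.mpr hα.le), inv_mul_eq_div, le_div_iff₀ hα, mul_comm]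
    exact hT x

variable [NormedAddCommGroup F] [InnerProductSpace 𝕜 F]

theorem StrongDual.mem_of_isClosed_of_forall_apply_eq_zero [CompleteSpace F]
    {M : Submodule 𝕜 (StrongDual 𝕜 F)} (hM : IsClosed (M : Set (StrongDual 𝕜 F)))
    {ℓ : StrongDual 𝕜 F} (hℓ : ∀ v, (∀ φ ∈ M, φ v = 0) → ℓ v = 0) : ℓ ∈ M := by
  set K : Submodule 𝕜 F := M.comap (toDual 𝕜 F).toLinearEquiv.toLinearMap
  have hK : IsClosed (K : Set F) := hM.preimage (toDual 𝕜 F).continuous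
  have hKperp : ∀ v ∈ Kᗮ, ∀ φ ∈ M, φ v = 0 := fun v hv φ hφ => by
    rw [← toDual_symm_apply]
    exact hv _ (by simpa [K] using hφ)
  have hℓK : (toDual 𝕜 F).symm ℓ ∈ Kᗮᗮ := by
    rw [Submodule.mem_orthogonal']
    intro v hv
    rw [toDual_symm_apply]
    exact hℓ v (hKperp v hv)
  rw [Submodule.orthogonal_orthogonal_eq_closure, IsClosed.submodule_topologicalClosure_eq hK]
    at hℓK
  simpa [K] using hℓK

variable [CompleteSpace E]

theorem existsUnique_apply_eq_of_inf_sup [CompleteSpace F] (c : E →L[𝕜] F →L[𝕜] 𝕜)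
    {α : ℝ} (hα : 0 < α) (hc : ∀ a, α * ‖a‖ ≤ ‖c a‖) {ℓ : StrongDual 𝕜 F}
    (hℓ : ∀ v, (∀ a, c a v = 0) → ℓ v = 0) : ∃! a, c a = ℓ := by
  have hanti := c.antilipschitz_of_inf_sup hα hc
  set M : Submodule 𝕜 (StrongDual 𝕜 F) := LinearMap.range (c : E →ₗ[𝕜] StrongDual 𝕜 F)
  have hclosed : IsClosed (M : Set (StrongDual 𝕜 F)) := by
    rw [LinearMap.coe_range, ContinuousLinearMap.coe_coe]
    exact hanti.isClosed_range c.uniformContinuous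
  obtain ⟨a, rfl⟩ : ℓ ∈ M :=
    StrongDual.mem_of_isClosed_of_forall_apply_eq_zero hclosed fun v hv =>
      hℓ v fun a => hv _ ⟨a, rfl⟩
  exact ⟨a, rfl, fun a' ha' => hanti.injective ha'⟩

theorem existsUnique_forall_mem_apply_eq_of_inf_sup (b : E →L[𝕜] F →L[𝕜] 𝕜)
    (V : Submodule 𝕜 F) [CompleteSpace V] {α : ℝ} (hα : 0 < α)
    (hb : ∀ u, α * ‖u‖ ≤ ‖(b u).comp V.subtypeL‖) (hV0 : ∀ v ∈ V, (∀ u, b u v = 0) → v = 0)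
    (ℓ : StrongDual 𝕜 F) : ∃! u, ∀ v ∈ V, b u v = ℓ v := by
  set bV : E →L[𝕜] V →L[𝕜] 𝕜 := (ContinuousLinearMap.compL 𝕜 V F 𝕜).flip V.subtypeL ∘L b
  have hsol : ∀ u, bV u = ℓ.comp V.subtypeL ↔ ∀ v ∈ V, b u v = ℓ v := fun u => by
    simp [ContinuousLinearMap.ext_iff, bV]
  simpa only [hsol] using existsUnique_apply_eq_of_inf_sup bV hα hb (ℓ := ℓ.comp V.subtypeL)
    fun v hv => by simp [hV0 v v.2 hv]

end InfSup

/-- Under the assumptions of the abstract broken well-posedness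
theorem, if additionally `V₀ = {0}`, then for every `ℓ ∈ W'` the broken
problem `b(u,v) + b̂(û,v) = ℓ(v) ∀v ∈ W` is uniquely solvable, and its
`U`-component coincides with the unique solution of the unbroken problem
`b(u,v) = ℓ(v) ∀v ∈ V`. -/
theorem broken_problem_unique_solvability
    {U Uhat W : Type*}
    [NormedAddCommGroup U] [InnerProductSpace ℝ U] [CompleteSpace U]
    [NormedAddCommGroup Uhat] [InnerProductSpace ℝ Uhat] [CompleteSpace Uhat]
    [NormedAddCommGroup W] [InnerProductSpace ℝ W] [CompleteSpace W]
    (V : Submodule ℝ W) (hVclosed : IsClosed (V : Set W))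
    (b : U →L[ℝ] W →L[ℝ] ℝ) (bhat : Uhat →L[ℝ] W →L[ℝ] ℝ)
    (α : ℝ) (hα : 0 < α)
    (hA3 : ∀ u : U, α * ‖u‖ ≤ ‖(b u).comp V.subtypeL‖)
    (hV : (V : Set W) = {v : W | ∀ uh : Uhat, bhat uh v = 0})
    (αhat : ℝ) (hαhat : 0 < αhat)
    (hA4 : ∀ uh : Uhat, αhat * ‖uh‖ ≤ ‖bhat uh‖)
    -- triviality of V₀
    (hV0 : ∀ v ∈ V, (∀ u : U, b u v = 0) → v = 0)
    (ℓ : W →L[ℝ] ℝ) :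
    (∃! p : U × Uhat, ∀ v : W, b p.1 v + bhat p.2 v = ℓ v) ∧
    (∃! u : U, ∀ v ∈ V, b u v = ℓ v) ∧
    (∀ (p : U × Uhat) (u : U),
      (∀ v : W, b p.1 v + bhat p.2 v = ℓ v) →
      (∀ v ∈ V, b u v = ℓ v) → p.1 = u) := by
  have : CompleteSpace V := hVclosed.completeSpace_coe
  have hmemV : ∀ v, v ∈ V ↔ ∀ uh, bhat uh v = 0 := fun v => Set.ext_iff.mp hV v
  obtain ⟨u₀, hu₀, hu₀_unique⟩ := existsUnique_forall_mem_apply_eq_of_inf_sup b V hα hA3 hV0 ℓ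
  have hfst : ∀ p : U × Uhat, (∀ v, b p.1 v + bhat p.2 v = ℓ v) → p.1 = u₀ :=
    fun p hp => hu₀_unique p.1 fun v hv => by simpa [(hmemV v).mp hv p.2] using hp v
  obtain ⟨uh₀, huh₀, huh₀_unique⟩ : ∃! uh, bhat uh = ℓ - b u₀ :=
    existsUnique_apply_eq_of_inf_sup bhat hαhat hA4 fun v hv => by
      simp [hu₀ v ((hmemV v).mpr hv)]
  refine ⟨⟨(u₀, uh₀), fun v => ?_, fun p hp => ?_⟩, ⟨u₀, hu₀, hu₀_unique⟩,
    fun p u hp hu => (hfst p hp).trans (hu₀_unique u hu).symm⟩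
  · simp [huh₀]
  · refine Prod.ext (hfst p hp) (huh₀_unique p.2 ?_)
    ext v
    simp [← hfst p hp, ← hp v]
end

section
/- Let U, V be Hilbert spaces, b: U × V → ℝ continuous with continuity constant M and satisfying the discrete inf-sup condition on finite-dimensional subspaces U^h ⊆ U, V^h ⊆ V with dim U^h = dim V^h and constant α_h > 0: α_h‖u^h‖ ≤ sup_{0≠v^h∈V^h} b(u^h,v^h)/‖v^h‖ for all u^h ∈ U^h. Let u ∈ U solve b(u,v) = ℓ(v) for all v ∈ V and u^h ∈ U^h solve b(u^h,v^h) = ℓ(v^h) for all v^h ∈ V^h. Then ‖u − u^h‖_U ≤ (1 + M/α_h) inf_{w^h ∈ U^h} ‖u − w^h‖_U. -/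
/-- Babuška's theorem: quasi-optimality of Petrov–Galerkin
methods under a discrete inf-sup condition.  `b : U × V → ℝ` is continuous
with constant `M`, `Uh ⊆ U` and `Vh ⊆ V` are finite-dimensional subspaces of
equal dimension, the discrete inf-sup condition holds with `α_h > 0`, `u`
solves the continuous problem and `uh ∈ Uh` the discrete one.  Then
`‖u − uh‖ ≤ (1 + M/α_h) inf_{w_h ∈ Uh} ‖u − w_h‖`. -/
theorem babuska_quasi_optimality
    {U V : Type*}
    [NormedAddCommGroup U] [InnerProductSpace ℝ U] [CompleteSpace U]
    [NormedAddCommGroup V] [InnerProductSpace ℝ V] [CompleteSpace V]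
    (b : U →L[ℝ] V →L[ℝ] ℝ)
    (M : ℝ) (hM : 0 < M)
    (hcont : ∀ (u : U) (v : V), |b u v| ≤ M * ‖u‖ * ‖v‖)
    (Uh : Submodule ℝ U) [FiniteDimensional ℝ Uh]
    (Vh : Submodule ℝ V) [FiniteDimensional ℝ Vh]
    (hdim : Module.finrank ℝ Uh = Module.finrank ℝ Vh)
    (αh : ℝ) (hαh : 0 < αh)
    (hinfsup : ∀ uh ∈ Uh,
      αh * ‖uh‖ ≤ sSup {r : ℝ | ∃ vh ∈ Vh, vh ≠ 0 ∧ r = b uh vh / ‖vh‖})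
    (ℓ : V →L[ℝ] ℝ)
    (u : U) (hu : ∀ v : V, b u v = ℓ v)
    (uh : U) (huhmem : uh ∈ Uh) (huh : ∀ vh ∈ Vh, b uh vh = ℓ vh) :
    ‖u - uh‖ ≤ (1 + M / αh) * sInf {r : ℝ | ∃ wh ∈ Uh, r = ‖u - wh‖} := by
  set c : ℝ := 1 + M / αh with hc
  have hcpos : 0 < c := by positivity
  -- key: for any wh ∈ Uh, ‖u - uh‖ ≤ c * ‖u - wh‖
  have key : ∀ wh ∈ Uh, ‖u - uh‖ ≤ c * ‖u - wh‖ := by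
    intro wh hwh
    have hmem : wh - uh ∈ Uh := Submodule.sub_mem Uh hwh huhmem
    have hsup := hinfsup (wh - uh) hmem
    have hbound : sSup {r : ℝ | ∃ vh ∈ Vh, vh ≠ 0 ∧ r = b (wh - uh) vh / ‖vh‖}
        ≤ M * ‖u - wh‖ := by
      apply Real.sSup_le
      · rintro r ⟨vh, hvh, hvh0, rfl⟩
        have horth : b (wh - uh) vh = b (wh - u) vh := by
          simp only [map_sub, ContinuousLinearMap.sub_apply]
          rw [hu vh, huh vh hvh]
        rw [horth]
        have h1 : b (wh - u) vh ≤ M * ‖wh - u‖ * ‖vh‖ :=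
          le_trans (le_abs_self _) (hcont _ _)
        have hvpos : 0 < ‖vh‖ := norm_pos_iff.mpr hvh0
        rw [div_le_iff₀ hvpos]
        calc b (wh - u) vh ≤ M * ‖wh - u‖ * ‖vh‖ := h1
          _ = M * ‖u - wh‖ * ‖vh‖ := by rw [norm_sub_rev]
      · positivity
    have h2 : αh * ‖wh - uh‖ ≤ M * ‖u - wh‖ := le_trans hsup hbound
    have h3 : ‖wh - uh‖ ≤ M / αh * ‖u - wh‖ := by
      rw [div_mul_eq_mul_div, le_div_iff₀ hαh, mul_comm (‖wh - uh‖) αh]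
      linarith [h2]
    calc ‖u - uh‖ ≤ ‖u - wh‖ + ‖wh - uh‖ := norm_sub_le_norm_sub_add_norm_sub u wh uh
      _ ≤ ‖u - wh‖ + M / αh * ‖u - wh‖ := by linarith
      _ = c * ‖u - wh‖ := by ring
  -- conclude via sInf
  have hne : {r : ℝ | ∃ wh ∈ Uh, r = ‖u - wh‖}.Nonempty :=
    ⟨‖u - (0:U)‖, 0, Submodule.zero_mem Uh, rfl⟩
  have hle : ‖u - uh‖ / c ≤ sInf {r : ℝ | ∃ wh ∈ Uh, r = ‖u - wh‖} := by
    apply le_csInf hne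
    rintro r ⟨wh, hwh, rfl⟩
    rw [div_le_iff₀ hcpos, mul_comm]
    exact key wh hwh
  rw [div_le_iff₀ hcpos, mul_comm] at hle
  exact hle
end

section
/- Let U, W be Hilbert spaces, b: U × W → ℝ continuous and satisfying the inf-sup condition with constant α > 0 and with trivial adjoint kernel. Let B: U → W' be defined by (Bu)(v) = b(u,v), R_W: W → W' the Riesz map, and T = R_W^{-1} ∘ B the trial-to-test operator. Then for any finite-dimensional subspace U^h ⊆ U, the choice W^h = T(U^h) satisfies dim W^h = dim U^h and the discrete inf-sup condition holds with the same constant α: α‖u^h‖_U ≤ sup_{0≠v^h∈W^h} b(u^h,v^h)/‖v^h‖_W for all u^h ∈ U^h. -/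
open scoped RealInnerProductSpace

/-- optimal test spaces via the trial-to-test operator.
`b : U × W → ℝ` is a continuous bilinear form on Hilbert spaces satisfying the
inf-sup condition `α‖u‖ ≤ sup_{0≠v} b(u,v)/‖v‖ = ‖b u‖_{W'}` with trivial
adjoint kernel.  `T = R_W⁻¹ ∘ B` is the trial-to-test operator, characterized
by `(T u, v)_W = b(u,v)` for all `v` (hypothesis `hT`).  Then for every
finite-dimensional trial subspace `Uh`, the optimal test space `Wh = T(Uh)`
has the same dimension and the discrete inf-sup condition holds with the same
constant `α`. -/
theorem optimal_test_space_discrete_inf_sup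
    {U W : Type*}
    [NormedAddCommGroup U] [InnerProductSpace ℝ U] [CompleteSpace U]
    [NormedAddCommGroup W] [InnerProductSpace ℝ W] [CompleteSpace W]
    (b : U →L[ℝ] W →L[ℝ] ℝ)
    (α : ℝ) (hα : 0 < α)
    (hinfsup : ∀ u : U, α * ‖u‖ ≤ ‖b u‖)
    (hkernel : ∀ v : W, (∀ u : U, b u v = 0) → v = 0)
    (T : U →L[ℝ] W)
    (hT : ∀ (u : U) (v : W), ⟪T u, v⟫ = b u v)
    (Uh : Submodule ℝ U) [FiniteDimensional ℝ Uh] :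
    Module.finrank ℝ (Uh.map (T : U →ₗ[ℝ] W)) = Module.finrank ℝ Uh ∧
    (∀ uh ∈ Uh,
      α * ‖uh‖ ≤ sSup {r : ℝ | ∃ vh ∈ Uh.map (T : U →ₗ[ℝ] W), vh ≠ 0 ∧
          r = b uh vh / ‖vh‖}) := by

  -- `b u` is the inner product with `T u`, hence `‖b u‖ = ‖T u‖`.
  have hnorm : ∀ u : U, ‖b u‖ = ‖T u‖ := by
    intro u
    have : b u = innerSL ℝ (T u) := by
      ext v; simpa using (hT u v).symm
    rw [this, innerSL_apply_norm]
  -- T is injective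
  have hinj : Function.Injective (T : U →ₗ[ℝ] W) := by
    rw [← LinearMap.ker_eq_bot]
    rw [LinearMap.ker_eq_bot']
    intro u hu
    have h0 : ‖b u‖ = 0 := by
      rw [hnorm u]; simpa using congrArg norm hu
    have := hinfsup u
    rw [h0] at this
    have : ‖u‖ ≤ 0 := by nlinarith [norm_nonneg u]
    simpa using le_antisymm this (norm_nonneg u)
  constructor
  · exact (Submodule.equivMapOfInjective (T : U →ₗ[ℝ] W) hinj Uh).finrank_eq.symm
  · intro uh huh
    set S : Set ℝ := {r : ℝ | ∃ vh ∈ Uh.map (T : U →ₗ[ℝ] W), vh ≠ 0 ∧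
          r = b uh vh / ‖vh‖} with hS
    have hbdd : BddAbove S := by
      refine ⟨‖b uh‖, ?_⟩
      rintro r ⟨vh, _, hvh0, rfl⟩
      rw [div_le_iff₀ (norm_pos_iff.mpr hvh0)]
      exact le_trans (le_abs_self _) (by simpa using (b uh).le_opNorm vh)
    by_cases h0 : uh = 0
    · subst h0
      simp only [norm_zero, mul_zero]
      rcases Set.eq_empty_or_nonempty S with he | hne
      · rw [he, Real.sSup_empty]
      · obtain ⟨r, hr⟩ := hne
        refine le_csSup_of_le hbdd hr ?_
        obtain ⟨vh, _, _, rfl⟩ := hr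
        have : b (0:U) vh = 0 := by rw [map_zero]; rfl
        rw [this, zero_div]
    · have hTuh : T uh ≠ 0 := fun h => h0 (hinj (by simpa using h))
      have hmem : b uh (T uh) / ‖T uh‖ ∈ S :=
        ⟨T uh, ⟨uh, huh, rfl⟩, hTuh, rfl⟩
      have hval : b uh (T uh) / ‖T uh‖ = ‖T uh‖ := by
        rw [← hT uh (T uh), real_inner_self_eq_norm_sq, pow_two, mul_div_assoc,
          div_self (norm_ne_zero_iff.mpr hTuh), mul_one]
      calc α * ‖uh‖ ≤ ‖b uh‖ := hinfsup uh
        _ = ‖T uh‖ := hnorm uh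
        _ = b uh (T uh) / ‖T uh‖ := hval.symm
        _ ≤ sSup S := le_csSup hbdd hmem
end
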